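/- Every generalized Nash equilibrium lies in the intersection over i of the C_i-Pareto minimizers over ⋂_j 𝕏_j: NE(f, (𝕏_i)_{i=1}^N) ⊆ ⋂_{i=1}^N C_i-argmin{(x, f(x)) : x ∈ ⋂_{j=1}^N 𝕏_j}. -/

import Mathlib

/-- The set of `D`-Pareto minimizers of `g` over the feasible set `S`. -/
def paretoArgmin {A Z : Type*} [AddCommGroup Z] (D : Set Z) (g : A → Z)
    (S : Set A) : Set A :=
  {xs | xs ∈ S ∧ ∀ x ∈ S, g xs - g x ∈ D → g x - g xs ∈ D}

/-- The cone `C_i` for player `i` inside `(∏ j, X j) × ℝ^N`. -/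
def playerCone {N : ℕ} (X : Fin N → Type*) [∀ j, AddCommGroup (X j)]
    [∀ j, Module ℝ (X j)] (i : Fin N) : Set ((∀ j, X j) × (Fin N → ℝ)) :=
  {p | (∀ j, j ≠ i → p.1 j = 0) ∧ 0 ≤ p.2 i}

/-- The non-convex ordering cone `C = ⋃ i, C_i`. -/
def bigCone {N : ℕ} (X : Fin N → Type*) [∀ j, AddCommGroup (X j)]
    [∀ j, Module ℝ (X j)] : Set ((∀ j, X j) × (Fin N → ℝ)) :=
  {p | ∃ i, (∀ j, j ≠ i → p.1 j = 0) ∧ 0 ≤ p.2 i}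

/-- The set of generalized Nash equilibria: `x* ∈ ⋂ i, 𝕏 i` such that no
player `i` can strictly decrease her cost by a unilateral deviation that is
feasible for her own constraint set `𝕏 i`. -/
def genNashEq {N : ℕ} {X : Fin N → Type*} (f : (∀ j, X j) → Fin N → ℝ)
    (K : Fin N → Set (∀ j, X j)) : Set (∀ j, X j) :=
  {xs | xs ∈ ⋂ i, K i ∧ ∀ (i : Fin N) (xi : X i),
    Function.update xs i xi ∈ K i → f xs i ≤ f (Function.update xs i xi) i}

/-! A feasible `x` that `C_i`-dominates `x*` differs from `x*` only in player `i`'s block, so it is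
a unilateral deviation of player `i`; the equilibrium inequality `f x* i ≤ f x i` then puts
`(x, f x) - (x*, f x*)` back in `C_i`. -/

theorem sub_mem_playerCone_iff {N : ℕ} {X : Fin N → Type*} [∀ j, AddCommGroup (X j)]
    [∀ j, Module ℝ (X j)] {i : Fin N} {x y : ∀ j, X j} {u v : Fin N → ℝ} :
    (x, u) - (y, v) ∈ playerCone X i ↔ (∀ j, j ≠ i → x j = y j) ∧ v i ≤ u i := by
  simp only [playerCone, Set.mem_ofPred_eq, Prod.fst_sub, Prod.snd_sub, Pi.sub_apply,
    sub_eq_zero, sub_nonneg]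

theorem le_of_mem_genNashEq {N : ℕ} {X : Fin N → Type*} {f : (∀ j, X j) → Fin N → ℝ}
    {K : Fin N → Set (∀ j, X j)} {xs x : ∀ j, X j} (hxs : xs ∈ genNashEq f K) {i : Fin N}
    (hx : x ∈ K i) (hdev : ∀ j, j ≠ i → x j = xs j) : f xs i ≤ f x i := by
  have hupdate : x = Function.update xs i (x i) := Function.eq_update_iff.2 ⟨rfl, hdev⟩
  rw [hupdate] at hx ⊢
  exact hxs.2 i (x i) hx

/-- Every generalized Nash equilibrium lies in the intersection over `i` of the
`C_i`-Pareto minimizers over `⋂ j, 𝕏 j`. -/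
theorem genNashEq_subset_iInter_paretoArgmin {N : ℕ} (X : Fin N → Type*)
    [∀ j, AddCommGroup (X j)] [∀ j, Module ℝ (X j)]
    (f : (∀ j, X j) → Fin N → ℝ) (K : Fin N → Set (∀ j, X j)) :
    genNashEq f K ⊆
      ⋂ i : Fin N, paretoArgmin (playerCone X i) (fun x => (x, f x)) (⋂ j, K j) := by
  intro xs hxs
  refine Set.mem_iInter.2 fun i => ⟨hxs.1, fun x hx hcone => ?_⟩
  obtain ⟨hdev, -⟩ := sub_mem_playerCone_iff.1 hcone
  have hle : f xs i ≤ f x i := le_of_mem_genNashEq hxs (Set.mem_iInter.1 hx i) fun j hj =>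
    (hdev j hj).symm
  exact sub_mem_playerCone_iff.2 ⟨fun j hj => (hdev j hj).symm, hle⟩
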